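/- For every nonconstant inner function θ₀, the model space H_{θ₀} = H^2 ⊖ θ₀H^2 contains an outer function that is invertible in H^∞. -/

import Mathlib

open MeasureTheory Complex Submodule
noncomputable section
instance fact2pi : Fact (0 < 2 * Real.pi) := ⟨by positivity⟩
instance factTop1 : Fact ((1:ENNReal) ≤ (⊤:ENNReal)) := ⟨le_top⟩
/-- the circle group -/
abbrev Tc := AddCircle (2 * Real.pi)
/-- normalized Haar measure on the circle -/
abbrev muh : Measure Tc := AddCircle.haarAddCircle
/-- L² of the circle -/
abbrev L2 := Lp ℂ 2 muh
/-- L^∞ of the circle -/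
abbrev Linf := Lp ℂ ⊤ muh

/-- The Hardy space `H²` as a closed subspace of `L²` of the circle. -/
def H2 : Submodule ℂ L2 :=
  (span ℂ (Set.range fun n : ℕ => (fourierLp 2 (n : ℤ) : L2))).topologicalClosure

theorem isClosed_H2 : IsClosed (H2 : Set L2) := Submodule.isClosed_topologicalClosure _
instance : CompleteSpace H2 := IsClosed.completeSpace_coe (hs := isClosed_H2)

theorem memLp2_mul (φ : Linf) (g : L2) :
    MemLp ((φ : Tc → ℂ) • (g : Tc → ℂ)) 2 muh :=
  MemLp.smul (Lp.memLp g) (Lp.memLp φ)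

/-- multiplication of an `L∞` function and an `L²` function, as an element of `L²`. -/
def mulL2 (φ : Linf) (g : L2) : L2 := (memLp2_mul φ g).toLp _

theorem mulL2_add (φ : Linf) (g h : L2) : mulL2 φ (g + h) = mulL2 φ g + mulL2 φ h := by
  simp only [mulL2]
  rw [← MemLp.toLp_add]
  apply MemLp.toLp_congr
  filter_upwards [Lp.coeFn_add g h] with x hx
  simp only [Pi.mul_apply, Pi.smul_apply, smul_eq_mul, hx, Pi.add_apply]
  ring

theorem mulL2_smul (φ : Linf) (c : ℂ) (g : L2) : mulL2 φ (c • g) = c • mulL2 φ g := by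
  simp only [mulL2]
  rw [← MemLp.toLp_const_smul]
  apply MemLp.toLp_congr
  filter_upwards [Lp.coeFn_smul c g] with x hx
  simp only [Pi.mul_apply, Pi.smul_apply, smul_eq_mul, hx]
  ring

theorem mulL2_norm (φ : Linf) (g : L2) : ‖mulL2 φ g‖ ≤ ‖φ‖ * ‖g‖ := by
  rw [mulL2, Lp.norm_toLp]
  have h : eLpNorm ((φ : Tc → ℂ) • (g : Tc → ℂ)) 2 muh ≤
      eLpNorm (φ : Tc → ℂ) ⊤ muh * eLpNorm (g : Tc → ℂ) 2 muh :=
    eLpNorm_smul_le_mul_eLpNorm (Lp.aestronglyMeasurable g) (Lp.aestronglyMeasurable φ)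
  calc (eLpNorm ((φ : Tc → ℂ) • (g : Tc → ℂ)) 2 muh).toReal
      ≤ (eLpNorm (φ : Tc → ℂ) ⊤ muh * eLpNorm (g : Tc → ℂ) 2 muh).toReal := by
        apply ENNReal.toReal_mono
        · exact ENNReal.mul_ne_top (Lp.eLpNorm_ne_top φ) (Lp.eLpNorm_ne_top g)
        · exact h
    _ = ‖φ‖ * ‖g‖ := by
        rw [ENNReal.toReal_mul, Lp.norm_def, Lp.norm_def]

/-- Multiplication by an `L^∞` function as a continuous linear operator on `L²`. -/
def Mmul (φ : Linf) : L2 →L[ℂ] L2 :=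
  LinearMap.mkContinuous
    { toFun := mulL2 φ
      map_add' := mulL2_add φ
      map_smul' := mulL2_smul φ } ‖φ‖ (mulL2_norm φ)

/-- the orthogonal projection `P : L² → H²`. -/
abbrev P2 : L2 →L[ℂ] ↥H2 := orthogonalProjection H2

/-- The Toeplitz operator with symbol `φ ∈ L^∞`, acting on `H²`: `T_φ g = P (φ g)`. -/
def Toep (φ : Linf) : ↥H2 →L[ℂ] ↥H2 := P2 ∘L (Mmul φ) ∘L H2.subtypeL

/-- The Toeplitz operator, viewed as a map `L² → L²` (useful to avoid coercions). -/
def TopL (φ : Linf) : L2 →L[ℂ] L2 := H2.subtypeL ∘L P2 ∘L Mmul φ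

theorem memLpTop_mul (φ ψ : Linf) : MemLp ((φ : Tc → ℂ) • (ψ : Tc → ℂ)) ⊤ muh :=
  MemLp.smul (Lp.memLp ψ) (Lp.memLp φ)

/-- `L^∞` is closed under products; we register this as a `Mul` instance. -/
instance : Mul Linf := ⟨fun φ ψ => (memLpTop_mul φ ψ).toLp _⟩

/-- the constant function `1` in `L^∞`. -/
instance : One Linf := ⟨(memLp_top_const (1 : ℂ)).toLp _⟩

/-- the embedding of `L^∞` into `L²` (the measure is finite). -/
def toL2 (φ : Linf) : L2 := ((Lp.memLp φ).mono_exponent le_top).toLp _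

/-- `H^∞`: the essentially bounded functions lying in the Hardy space. -/
def Hinf : Set Linf := {φ | toL2 φ ∈ H2}

/-- pointwise complex conjugation on `L²`. -/
def conjL2 (f : L2) : L2 :=
  ((Complex.conjCLE.toContinuousLinearMap).comp_memLp' (Lp.memLp f)).toLp _

/-- pointwise complex conjugation on `L^∞`. -/
def conjLinf (φ : Linf) : Linf :=
  ((Complex.conjCLE.toContinuousLinearMap).comp_memLp' (Lp.memLp φ)).toLp _

/-- composition with `z ↦ z⁻¹` (i.e. `x ↦ -x` on the additive circle) on `L²`. -/
def compNegL2 : L2 →ₗᵢ[ℂ] L2 :=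
  Lp.compMeasurePreservingₗᵢ ℂ (fun x : Tc => -x) (Measure.measurePreserving_neg muh)

/-- composition with `z ↦ z⁻¹` on `L^∞`. -/
def compNegLinf (φ : Linf) : Linf :=
  Lp.compMeasurePreserving (fun x : Tc => -x) (Measure.measurePreserving_neg muh) φ

/-- `φ̃(z) = conj (φ (z̄))`. -/
def tildeL (φ : Linf) : Linf := conjLinf (compNegLinf φ)

/-- `f̃(z) = conj (f (z̄))` on `L²`. -/
def tilde2 (f : L2) : L2 := conjL2 (compNegL2 f)

/-- the unitary `J` on `L²`: `(J f)(z) = z̄ f(z̄)`. -/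
def Jop : L2 →L[ℂ] L2 := (Mmul (fourierLp ⊤ (-1))) ∘L compNegL2.toContinuousLinearMap

/-- the projection onto `(H²)^⊥`. -/
def PperpL : L2 →L[ℂ] L2 := ContinuousLinearMap.id ℂ L2 - H2.subtypeL ∘L P2

/-- The Hankel operator with symbol `φ`: `H_φ g = J P^⊥ (φ g)`. -/
def Hank (φ : Linf) : ↥H2 →L[ℂ] L2 := Jop ∘L PperpL ∘L (Mmul φ) ∘L H2.subtypeL

/-- the self-commutator `[T^*, T] = T^*T - TT^*`. -/
def selfCommOp {H : Type*} [NormedAddCommGroup H] [InnerProductSpace ℂ H] [CompleteSpace H]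
    (T : H →L[ℂ] H) : H →L[ℂ] H :=
  ContinuousLinearMap.adjoint T ∘L T - T ∘L ContinuousLinearMap.adjoint T

/-- hyponormality of a Hilbert-space operator. -/
def IsHyponormalOp {H : Type*} [NormedAddCommGroup H] [InnerProductSpace ℂ H] [CompleteSpace H]
    (T : H →L[ℂ] H) : Prop := (selfCommOp T).IsPositive

/-- normality of a Hilbert-space operator. -/
def IsNormalOp {H : Type*} [NormedAddCommGroup H] [InnerProductSpace ℂ H] [CompleteSpace H]
    (T : H →L[ℂ] H) : Prop := selfCommOp T = 0

/-- finite rank operator. -/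
def FiniteRankOp {H : Type*} [NormedAddCommGroup H] [InnerProductSpace ℂ H]
    (T : H →L[ℂ] H) : Prop := FiniteDimensional ℂ ↥(LinearMap.range (T : H →ₗ[ℂ] H))

/-- `φ` is of bounded type: a quotient of two `H^∞` functions. -/
def BoundedType (φ : Linf) : Prop :=
  ∃ ψ₁ ψ₂ : Linf, ψ₁ ∈ Hinf ∧ ψ₂ ∈ Hinf ∧ (∀ᵐ x ∂muh, (ψ₂ : Tc → ℂ) x ≠ 0) ∧
    (∀ᵐ x ∂muh, (φ : Tc → ℂ) x = (ψ₁ : Tc → ℂ) x / (ψ₂ : Tc → ℂ) x)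

/-- scalar inner function. -/
def IsInner (θ : Linf) : Prop := θ ∈ Hinf ∧ ∀ᵐ x ∂muh, ‖(θ : Tc → ℂ) x‖ = 1

/-- constant function in `L^∞`. -/
def IsConstLinf (θ : Linf) : Prop := ∃ c : ℂ, θ = c • (1 : Linf)

/-- the boundary function `z = e^{ix}` on the circle. -/
def zfun : Tc → ℂ := fun x => fourier 1 x

/-- finite Blaschke product. -/
def IsFiniteBlaschke (θ : Linf) : Prop :=
  ∃ (c : ℂ) (N : ℕ) (α : Fin N → ℂ), ‖c‖ = 1 ∧ (∀ i, ‖α i‖ < 1) ∧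
    ∀ᵐ x ∂muh, (θ : Tc → ℂ) x =
      c * ∏ i, (zfun x - α i) / (1 - (starRingEnd ℂ (α i)) * zfun x)

/-- divisibility of inner functions: `θ` divides `θ'`. -/
def InnerDivides (θ θ' : Linf) : Prop := ∃ ω : Linf, IsInner ω ∧ θ' = θ * ω

/-- evaluation of an `H²` function inside the disk, via its Taylor (Fourier) coefficients. -/
def evalDisk (f : L2) (α : ℂ) : ℂ := ∑' k : ℕ, fourierCoeff (f : Tc → ℂ) (k : ℤ) * α ^ k

/-- the model space `H_θ = H² ⊖ θH²`. -/
def ModelSpace (θ : Linf) : Submodule ℂ L2 := H2 ⊓ (Submodule.map (Mmul θ : L2 →ₗ[ℂ] L2) H2)ᗮ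

/-- outer function: the closed span of its (analytic) polynomial multiples is all of `H²`. -/
def IsOuter (h : L2) : Prop :=
  (span ℂ (Set.range fun n : ℕ => mulL2 (fourierLp ⊤ (n : ℤ)) h)).topologicalClosure = H2

/-- `h` coincides with an `H^∞` function which is invertible in `H^∞`. -/
def InvertibleHinf (h : L2) : Prop :=
  ∃ u v : Linf, toL2 u = h ∧ u ∈ Hinf ∧ v ∈ Hinf ∧ u * v = 1

/-- the set `E(φ)` appearing in Cowen's hyponormality criterion. -/
def Ecal (φ : Linf) : Set Linf :=
  {k | k ∈ Hinf ∧ ‖k‖ ≤ 1 ∧ φ - k * conjLinf φ ∈ Hinf}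

theorem isClosed_modelSpace (θ : Linf) : IsClosed ((ModelSpace θ : Set L2)) := by
  rw [ModelSpace, Submodule.coe_inf]
  exact isClosed_H2.inter (Submodule.isClosed_orthogonal _)

instance (θ : Linf) : CompleteSpace (ModelSpace θ) :=
  IsClosed.completeSpace_coe (hs := isClosed_modelSpace θ)

/-- the orthogonal projection of `L²` onto the model space `H_θ`, as an endomorphism of `L²`. -/
def Pmodel (θ : Linf) : L2 →L[ℂ] L2 :=
  (ModelSpace θ).subtypeL ∘L orthogonalProjection (ModelSpace θ)

/-!
The witness is the reproducing kernel `k = 1 - conj (θ(0)) θ` of `H_θ` at the origin: it is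
orthogonal to every `θ zⁿ` because `⟪1, θ zⁿ⟫ = θ̂(-n)` vanishes for `n > 0` while `θ` is an
isometric multiplier. A nonconstant inner function has `|θ(0)| < 1` (equality in Cauchy–Schwarz
against `1` would force `θ` to be constant), so `φ = conj (θ(0)) θ` has `‖φ‖_∞ < 1` and
`k = 1 - φ` has a bounded inverse `v`. That `v` lies in `H^∞` is the Neumann series argument:
`v` is the fixed point of the contraction `f ↦ 1 + φ f`, which preserves the closed subspace `H²`.
Finally a function invertible in `H^∞` is outer, since multiplication by it maps `H²` onto `H²`.
-/

open scoped InnerProductSpace ComplexConjugate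

section Multiplication

lemma coeFn_toL2 (φ : Linf) : (toL2 φ : Tc → ℂ) =ᵐ[muh] φ := MemLp.coeFn_toLp _

lemma coeFn_Mmul (φ : Linf) (f : L2) : (Mmul φ f : Tc → ℂ) =ᵐ[muh] fun x => φ x * f x :=
  (memLp2_mul φ f).coeFn_toLp

lemma coeFn_mul_Linf (φ ψ : Linf) : ((φ * ψ : Linf) : Tc → ℂ) =ᵐ[muh] fun x => φ x * ψ x :=
  (memLpTop_mul φ ψ).coeFn_toLp

lemma coeFn_one_Linf : ((1 : Linf) : Tc → ℂ) =ᵐ[muh] fun _ => 1 :=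
  (memLp_top_const (1 : ℂ)).coeFn_toLp

lemma toL2_injective : Function.Injective toL2 := fun φ ψ h =>
  Lp.ext <| (coeFn_toL2 φ).symm.trans <| (Lp.ext_iff.mp h).trans (coeFn_toL2 ψ)

lemma toL2_sub (φ ψ : Linf) : toL2 (φ - ψ) = toL2 φ - toL2 ψ := by
  refine Lp.ext ?_
  filter_upwards [coeFn_toL2 (φ - ψ), Lp.coeFn_sub φ ψ, Lp.coeFn_sub (toL2 φ) (toL2 ψ),
    coeFn_toL2 φ, coeFn_toL2 ψ] with x h₁ h₂ h₃ h₄ h₅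
  simp only [h₁, h₂, h₃, h₄, h₅, Pi.sub_apply]

lemma toL2_smul (c : ℂ) (φ : Linf) : toL2 (c • φ) = c • toL2 φ := by
  refine Lp.ext ?_
  filter_upwards [coeFn_toL2 (c • φ), Lp.coeFn_smul c φ, Lp.coeFn_smul c (toL2 φ),
    coeFn_toL2 φ] with x h₁ h₂ h₃ h₄
  simp only [h₁, h₂, h₃, h₄, Pi.smul_apply]

lemma toL2_fourierLp (n : ℤ) : toL2 (fourierLp ⊤ n) = fourierLp 2 n := by
  refine Lp.ext ?_
  filter_upwards [coeFn_toL2 (fourierLp ⊤ n), coeFn_fourierLp ⊤ n, coeFn_fourierLp 2 n]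
    with x h₁ h₂ h₃
  rw [h₁, h₂, h₃]

lemma toL2_one : toL2 1 = fourierLp 2 0 := by
  refine Lp.ext ?_
  filter_upwards [coeFn_toL2 1, coeFn_one_Linf, coeFn_fourierLp 2 0] with x h₁ h₂ h₃
  rw [h₁, h₂, h₃, fourier_zero]

lemma Mmul_toL2_comm (φ ψ : Linf) : Mmul φ (toL2 ψ) = Mmul ψ (toL2 φ) := by
  refine Lp.ext ?_
  filter_upwards [coeFn_Mmul φ (toL2 ψ), coeFn_Mmul ψ (toL2 φ), coeFn_toL2 φ, coeFn_toL2 ψ]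
    with x h₁ h₂ h₃ h₄
  rw [h₁, h₂, h₃, h₄, mul_comm]

lemma Mmul_fourierLp_zero (φ : Linf) : Mmul φ (fourierLp 2 0) = toL2 φ := by
  refine Lp.ext ?_
  filter_upwards [coeFn_Mmul φ (fourierLp 2 0), coeFn_fourierLp 2 0, coeFn_toL2 φ]
    with x h₁ h₂ h₃
  rw [h₁, h₂, h₃, fourier_zero, mul_one]

lemma Mmul_mul (φ ψ : Linf) (f : L2) : Mmul (φ * ψ) f = Mmul φ (Mmul ψ f) := by
  refine Lp.ext ?_
  filter_upwards [coeFn_Mmul (φ * ψ) f, coeFn_mul_Linf φ ψ, coeFn_Mmul φ (Mmul ψ f),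
    coeFn_Mmul ψ f] with x h₁ h₂ h₃ h₄
  rw [h₁, h₂, h₃, h₄, mul_assoc]

lemma Mmul_one (f : L2) : Mmul 1 f = f := by
  refine Lp.ext ?_
  filter_upwards [coeFn_Mmul 1 f, coeFn_one_Linf] with x h₁ h₂
  rw [h₁, h₂, one_mul]

lemma Mmul_fourierLp_fourierLp (m n : ℤ) :
    Mmul (fourierLp ⊤ m) (fourierLp 2 n) = fourierLp 2 (m + n) := by
  refine Lp.ext ?_
  filter_upwards [coeFn_Mmul (fourierLp ⊤ m) (fourierLp 2 n), coeFn_fourierLp ⊤ m,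
    coeFn_fourierLp 2 n, coeFn_fourierLp 2 (m + n)] with x h₁ h₂ h₃ h₄
  rw [h₁, h₂, h₃, h₄, fourier_add]

lemma inner_Mmul_Mmul {θ : Linf} (hθ : ∀ᵐ x ∂muh, ‖θ x‖ = 1) (f g : L2) :
    ⟪Mmul θ f, Mmul θ g⟫_ℂ = ⟪f, g⟫_ℂ := by
  rw [L2.inner_def, L2.inner_def]
  refine integral_congr_ae ?_
  filter_upwards [coeFn_Mmul θ f, coeFn_Mmul θ g, hθ] with x h₁ h₂ hx
  have hθx : conj (θ x) * θ x = 1 := by rw [Complex.conj_mul', hx]; norm_num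
  simp only [h₁, h₂, RCLike.inner_apply, map_mul]
  linear_combination (conj (f x) * g x) * hθx

lemma norm_Mmul_le (φ : Linf) : ‖Mmul φ‖ ≤ ‖φ‖ :=
  LinearMap.mkContinuous_norm_le _ (norm_nonneg φ) _

lemma norm_Mmul {θ : Linf} (hθ : ∀ᵐ x ∂muh, ‖θ x‖ = 1) (f : L2) : ‖Mmul θ f‖ = ‖f‖ := by
  rw [@norm_eq_sqrt_re_inner ℂ, @norm_eq_sqrt_re_inner ℂ _ _ _ _ f, inner_Mmul_Mmul hθ]

lemma inner_fourierLp_Mmul_fourierLp (φ : Linf) (m n : ℤ) :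
    ⟪fourierLp 2 m, Mmul φ (fourierLp 2 n)⟫_ℂ = ⟪fourierLp 2 (m - n), toL2 φ⟫_ℂ := by
  rw [L2.inner_def, L2.inner_def]
  refine integral_congr_ae ?_
  filter_upwards [coeFn_fourierLp 2 m, coeFn_Mmul φ (fourierLp 2 n), coeFn_fourierLp 2 n,
    coeFn_fourierLp 2 (m - n), coeFn_toL2 φ] with x h₁ h₂ h₃ h₄ h₅
  simp only [h₁, h₂, h₃, h₄, h₅, RCLike.inner_apply, ← fourier_neg]
  rw [show -(m - n) = -m + n by ring, fourier_add]
  ring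

lemma inner_fourierLp_toL2 (φ : Linf) (n : ℤ) :
    ⟪fourierLp 2 n, toL2 φ⟫_ℂ = fourierCoeff (φ : Tc → ℂ) n := by
  rw [← coe_fourierBasis, ← HilbertBasis.repr_apply_apply, fourierBasis_repr,
    fourierCoeff_congr_ae (coeFn_toL2 φ)]

end Multiplication

section Hardy

lemma H2_le_of_fourierLp_mem {S : Submodule ℂ L2} (hS : IsClosed (S : Set L2))
    (h : ∀ n : ℕ, fourierLp 2 (n : ℤ) ∈ S) : H2 ≤ S :=
  topologicalClosure_minimal _ (span_le.mpr (Set.range_subset_iff.mpr h)) hS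

lemma fourierLp_mem_H2 (n : ℕ) : fourierLp 2 (n : ℤ) ∈ H2 :=
  le_topologicalClosure _ (subset_span ⟨n, rfl⟩)

lemma inner_fourierLp_eq_zero_of_mem_H2 {m : ℤ} (hm : m < 0) {f : L2} (hf : f ∈ H2) :
    ⟪fourierLp 2 m, f⟫_ℂ = 0 :=
  H2_le_of_fourierLp_mem (S := LinearMap.ker (innerSL ℂ (fourierLp 2 m : L2) : L2 →ₗ[ℂ] ℂ))
    (innerSL ℂ _).isClosed_ker
    (fun n => LinearMap.mem_ker.mpr (orthonormal_fourier.2 (show m ≠ n by omega))) hf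

lemma Mmul_fourierLp_mem_H2 (m : ℕ) {f : L2} (hf : f ∈ H2) :
    Mmul (fourierLp ⊤ (m : ℤ)) f ∈ H2 :=
  H2_le_of_fourierLp_mem (S := H2.comap (Mmul (fourierLp ⊤ (m : ℤ)) : L2 →ₗ[ℂ] L2))
    (isClosed_H2.preimage (Mmul _).continuous)
    (fun n => by simpa [Mmul_fourierLp_fourierLp] using fourierLp_mem_H2 (m + n)) hf

lemma Mmul_mem_H2 {φ : Linf} (hφ : φ ∈ Hinf) {f : L2} (hf : f ∈ H2) : Mmul φ f ∈ H2 :=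
  H2_le_of_fourierLp_mem (S := H2.comap (Mmul φ : L2 →ₗ[ℂ] L2))
    (isClosed_H2.preimage (Mmul φ).continuous)
    (fun n => by
      rw [mem_comap, ContinuousLinearMap.coe_coe, ← toL2_fourierLp, Mmul_toL2_comm]
      exact Mmul_fourierLp_mem_H2 n hφ) hf

lemma one_mem_Hinf : (1 : Linf) ∈ Hinf := by
  simpa [Hinf, toL2_one] using fourierLp_mem_H2 0

lemma smul_mem_Hinf (c : ℂ) {φ : Linf} (hφ : φ ∈ Hinf) : c • φ ∈ Hinf := by
  simpa [Hinf, toL2_smul] using smul_mem H2 c hφ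

end Hardy

section Invertibility

lemma ae_norm_le_norm_Linf (φ : Linf) : ∀ᵐ x ∂muh, ‖φ x‖ ≤ ‖φ‖ := by
  filter_upwards [ae_le_eLpNormEssSup (f := (φ : Tc → ℂ)) (μ := muh)] with x hx
  rw [Lp.norm_def, eLpNorm_exponent_top, ← toReal_enorm]
  exact ENNReal.toReal_mono (by simpa [eLpNorm_exponent_top] using Lp.eLpNorm_ne_top φ) hx

lemma mem_H2_of_add_Mmul_eq {φ : Linf} (hφ : φ ∈ Hinf) (hφ1 : ‖φ‖ < 1) {g f : L2}
    (hg : g ∈ H2) (hf : g + Mmul φ f = f) : f ∈ H2 := by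
  set T : L2 → L2 := fun x => g + Mmul φ x
  have hT : ContractingWith ‖φ‖₊ T := ⟨hφ1, LipschitzWith.of_dist_le_mul fun x y => by
    simpa [T, dist_eq_norm, ← map_sub] using (Mmul φ).le_of_opNorm_le (norm_Mmul_le φ) (x - y)⟩
  have hmaps : Set.MapsTo T H2 H2 := fun x hx => add_mem hg (Mmul_mem_H2 hφ hx)
  rw [hT.fixedPoint_unique hf]
  exact isClosed_H2.mem_of_tendsto (hT.tendsto_iterate_fixedPoint 0)
    (Filter.Eventually.of_forall fun n => hmaps.iterate n (zero_mem H2))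

lemma exists_mul_eq_one_of_ae_le_norm {u : Linf} {δ : ℝ} (hδ : 0 < δ)
    (hu : ∀ᵐ x ∂muh, δ ≤ ‖u x‖) : ∃ v : Linf, u * v = 1 := by
  have hv : MemLp (fun x => (u x)⁻¹) ⊤ muh := by
    refine memLp_top_of_bound (Lp.aestronglyMeasurable u).aemeasurable.inv.aestronglyMeasurable
      δ⁻¹ ?_
    filter_upwards [hu] with x hx
    rw [norm_inv]
    exact inv_anti₀ hδ hx
  refine ⟨hv.toLp _, Lp.ext ?_⟩
  filter_upwards [coeFn_mul_Linf u (hv.toLp _), hv.coeFn_toLp, coeFn_one_Linf, hu]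
    with x h₁ h₂ h₃ hx
  rw [h₁, h₂, h₃, mul_inv_cancel₀ (norm_pos_iff.mp (hδ.trans_le hx))]

lemma exists_one_sub_mul_eq_one {φ : Linf} (hφ : ‖φ‖ < 1) : ∃ v : Linf, (1 - φ) * v = 1 := by
  refine exists_mul_eq_one_of_ae_le_norm (sub_pos.mpr hφ) ?_
  filter_upwards [ae_norm_le_norm_Linf φ, Lp.coeFn_sub 1 φ, coeFn_one_Linf] with x hx h₁ h₂
  rw [h₁, Pi.sub_apply, h₂]
  calc 1 - ‖φ‖ ≤ ‖(1 : ℂ)‖ - ‖φ x‖ := by rw [norm_one]; linarith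
    _ ≤ ‖1 - φ x‖ := norm_sub_norm_le _ _

lemma mem_Hinf_of_one_sub_mul_eq_one {φ v : Linf} (hφ : φ ∈ Hinf) (hφ1 : ‖φ‖ < 1)
    (hv : (1 - φ) * v = 1) : v ∈ Hinf := by
  refine mem_H2_of_add_Mmul_eq hφ hφ1 one_mem_Hinf (Lp.ext ?_)
  have hv' := coeFn_mul_Linf (1 - φ) v
  rw [hv] at hv'
  filter_upwards [Lp.coeFn_add (toL2 1) (Mmul φ (toL2 v)), coeFn_toL2 1,
    coeFn_Mmul φ (toL2 v), coeFn_toL2 v, coeFn_one_Linf, Lp.coeFn_sub 1 φ, hv']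
    with x h₁ h₂ h₃ h₄ h₅ h₆ h₇
  rw [h₆, Pi.sub_apply, h₅] at h₇
  rw [h₁, Pi.add_apply, h₂, h₃, h₄, h₅]
  linear_combination h₇

lemma isOuter_toL2_of_mul_eq_one {u v : Linf} (hu : u ∈ Hinf) (hv : v ∈ Hinf)
    (huv : u * v = 1) : IsOuter (toL2 u) := by
  have hgen (n : ℕ) : mulL2 (fourierLp ⊤ (n : ℤ)) (toL2 u) = Mmul u (fourierLp 2 (n : ℤ)) := by
    rw [← toL2_fourierLp, Mmul_toL2_comm]
    rfl
  have hspan : span ℂ (Set.range fun n : ℕ => mulL2 (fourierLp ⊤ (n : ℤ)) (toL2 u)) =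
      (span ℂ (Set.range fun n : ℕ => fourierLp 2 (n : ℤ))).map (Mmul u : L2 →ₗ[ℂ] L2) := by
    simp only [map_span, ← Set.range_comp, Function.comp_def, ContinuousLinearMap.coe_coe, hgen]
  rw [IsOuter, hspan]
  refine le_antisymm (topologicalClosure_minimal _ ?_ isClosed_H2) fun f hf => ?_
  · exact map_le_iff_le_comap.mpr fun f hf => Mmul_mem_H2 hu (le_topologicalClosure _ hf)
  · rw [← Mmul_one f, ← huv, Mmul_mul]
    exact topologicalClosure_map (Mmul u) _ (mem_map_of_mem (Mmul_mem_H2 hv hf))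

end Invertibility

def kernelAtZero (θ : Linf) : Linf := 1 - conj (fourierCoeff (θ : Tc → ℂ) 0) • θ

namespace IsInner

variable {θ : Linf} (hθ : IsInner θ)
include hθ

lemma norm_le_one : ‖θ‖ ≤ 1 := by
  simpa using Lp.norm_le_of_ae_bound zero_le_one (hθ.2.mono fun _ hx => hx.le)

lemma norm_toL2 : ‖toL2 θ‖ = 1 := by
  rw [← Mmul_fourierLp_zero, norm_Mmul hθ.2, orthonormal_fourier.1 0]

lemma norm_fourierCoeff_zero_lt_one (hnc : ¬ IsConstLinf θ) :
    ‖fourierCoeff (θ : Tc → ℂ) 0‖ < 1 := by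
  have he : ‖(fourierLp 2 0 : L2)‖ = 1 := orthonormal_fourier.1 0
  rw [← inner_fourierLp_toL2]
  refine ((norm_inner_le_norm _ _).trans_eq (by rw [he, hθ.norm_toL2, one_mul])).lt_of_ne
    fun heq => hnc ?_
  have h0 : (fourierLp 2 0 : L2) ≠ 0 := norm_ne_zero_iff.mp (by rw [he]; norm_num)
  have hθ0 : toL2 θ ≠ 0 := norm_ne_zero_iff.mp (by rw [hθ.norm_toL2]; norm_num)
  obtain ⟨r, -, hr⟩ :=
    (norm_inner_eq_norm_iff h0 hθ0).mp (by rw [heq, he, hθ.norm_toL2, one_mul])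
  exact ⟨r, toL2_injective (by rw [hr, toL2_smul, toL2_one])⟩

lemma toL2_kernelAtZero_mem_modelSpace : toL2 (kernelAtZero θ) ∈ ModelSpace θ := by
  set c₀ := fourierCoeff (θ : Tc → ℂ) 0
  have hk : toL2 (kernelAtZero θ) = fourierLp 2 0 - conj c₀ • toL2 θ := by
    rw [kernelAtZero, toL2_sub, toL2_smul, toL2_one]
  refine mem_inf.mpr ⟨hk ▸ sub_mem (fourierLp_mem_H2 0) (smul_mem _ _ hθ.1), ?_⟩
  rw [mem_orthogonal']
  rintro _ ⟨g, hg, rfl⟩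
  refine H2_le_of_fourierLp_mem
    (S := LinearMap.ker ((innerSL ℂ (toL2 (kernelAtZero θ))).comp (Mmul θ) : L2 →ₗ[ℂ] ℂ))
    (ContinuousLinearMap.isClosed_ker _) (fun n => ?_) hg
  have hiso : ⟪toL2 θ, Mmul θ (fourierLp 2 n)⟫_ℂ = ⟪(fourierLp 2 0 : L2), fourierLp 2 n⟫_ℂ := by
    rw [← Mmul_fourierLp_zero, inner_Mmul_Mmul hθ.2]
  rw [LinearMap.mem_ker, ContinuousLinearMap.coe_coe, ContinuousLinearMap.comp_apply,
    innerSL_apply_apply, hk, inner_sub_left, inner_smul_left, Complex.conj_conj, hiso,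
    inner_fourierLp_Mmul_fourierLp]
  rcases n.eq_zero_or_pos with rfl | hn
  · simp [inner_fourierLp_toL2, c₀, orthonormal_fourier.1 0]
  · rw [inner_fourierLp_eq_zero_of_mem_H2 (by omega) hθ.1,
      orthonormal_fourier.2 (show (0 : ℤ) ≠ n by omega), mul_zero, sub_zero]

end IsInner

/-- Lemma 3.4: for every nonconstant inner function `θ₀`, the model space
`H_{θ₀}` contains an outer function that is invertible in `H^∞`. -/
theorem modelSpace_contains_invertible_outer
    (θ₀ : Linf) (h₁ : IsInner θ₀) (h₂ : ¬ IsConstLinf θ₀) :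
    ∃ h : L2, h ∈ ModelSpace θ₀ ∧ IsOuter h ∧ InvertibleHinf h := by
  set φ : Linf := conj (fourierCoeff (θ₀ : Tc → ℂ) 0) • θ₀
  have hφ : φ ∈ Hinf := smul_mem_Hinf _ h₁.1
  have hφ1 : ‖φ‖ < 1 := by
    rw [norm_smul, RCLike.norm_conj]
    exact mul_lt_one_of_nonneg_of_lt_one_left (norm_nonneg _)
      (h₁.norm_fourierCoeff_zero_lt_one h₂) h₁.norm_le_one
  obtain ⟨v, hv⟩ := exists_one_sub_mul_eq_one hφ1
  have hmem := h₁.toL2_kernelAtZero_mem_modelSpace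
  have hu : kernelAtZero θ₀ ∈ Hinf := (mem_inf.mp hmem).1
  have hv' : v ∈ Hinf := mem_Hinf_of_one_sub_mul_eq_one hφ hφ1 hv
  exact ⟨_, hmem, isOuter_toL2_of_mul_eq_one hu hv' hv, _, v, rfl, hu, hv', hv⟩
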